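/- Let (H, ·, ∘) be a Hopf brace and define g⇀h := S(g₍₁₎)·(g₍₂₎∘h). Then for all g,h ∈ H: (i) g∘h = g₍₁₎·(g₍₂₎⇀h), and (ii) g·h = g₍₁₎∘(T(g₍₂₎)⇀h), where T is the antipode of (H, ∘). -/

import Mathlib

/-!
All identities are identities of linear maps out of `H` under convolution
`f ⋆ g = μ ∘ (f ⊗ g) ∘ Δ` for a bilinear `μ`; write `⋆` and `⊛` for the convolutions of `·` and `∘`,
`ρ_h = (- ∘ h)`, `σ_h = (- · h)` and `A_h = S ⋆ ρ_h`, so that `A_h g = g ⇀ h`.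
Then (i) is `id ⋆ A_h = (id ⋆ S) ⋆ ρ_h = ρ_h`. The brace axiom says `ρ_{z·h} = ρ_z ⋆ A_h`.
The antipode `T` of `(H, ∘)` reverses the coproduct, `Δ T = (T ⊗ T) τ Δ`, since both sides are
convolution inverses of `Δ`; hence `A_h ∘ T = T ⊛ σ_h`, and (ii) is `id ⊛ T ⊛ σ_h = σ_h`.
-/

open scoped TensorProduct
open Coalgebra

variable (R H : Type*) [CommRing R] [AddCommGroup H] [Module R H] [Coalgebra R H]

/-- A Hopf algebra structure (multiplication, unit, antipode) on the coalgebra `H`: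
the multiplication is associative with unit, comultiplication and counit are algebra
maps, and `S` is an antipode (expressed via arbitrary Sweedler representations). -/
structure HopfMul where
  mul : H →ₗ[R] H →ₗ[R] H
  one : H
  S : H →ₗ[R] H
  mul_assoc : ∀ a b c : H, mul (mul a b) c = mul a (mul b c)
  one_mul : ∀ a : H, mul one a = a
  mul_one : ∀ a : H, mul a one = a
  comul_mul : ∀ (a b : H) {ι κ : Type} (ra : Coalgebra.Repr R a ι) (rb : Coalgebra.Repr R b κ),
    comul (R := R) (mul a b) = ∑ i ∈ ra.index, ∑ j ∈ rb.index,
      mul (ra.left i) (rb.left j) ⊗ₜ[R] mul (ra.right i) (rb.right j)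
  comul_one : comul (R := R) one = one ⊗ₜ[R] one
  counit_mul : ∀ a b : H, counit (R := R) (mul a b) = counit (R := R) a * counit (R := R) b
  counit_one : counit (R := R) one = 1
  S_mul_left : ∀ (a : H) {ι : Type} (r : Coalgebra.Repr R a ι),
    ∑ i ∈ r.index, mul (S (r.left i)) (r.right i) = counit (R := R) a • one
  S_mul_right : ∀ (a : H) {ι : Type} (r : Coalgebra.Repr R a ι),
    ∑ i ∈ r.index, mul (r.left i) (S (r.right i)) = counit (R := R) a • one

/-- A Hopf brace: two Hopf algebra structures `dot` (written `·`) and `circ` (written `∘`)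
on the same coalgebra `H`, satisfying `g∘(h·ℓ) = (g₍₁₎∘h)·S(g₍₂₎)·(g₍₃₎∘ℓ)`. -/
structure HopfBrace where
  dot : HopfMul R H
  circ : HopfMul R H
  compat : ∀ (g h ℓ : H) {ι : Type} {κ : ι → Type} (r : Coalgebra.Repr R g ι)
      (r2 : ∀ i : ι, Coalgebra.Repr R (r.right i) (κ i)),
    circ.mul g (dot.mul h ℓ) = ∑ i ∈ r.index, ∑ j ∈ (r2 i).index,
      dot.mul (dot.mul (circ.mul (r.left i) h) (dot.S ((r2 i).left j)))
        (circ.mul ((r2 i).right j) ℓ)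

open TensorProduct

section Convolution

variable {R C A B E : Type*} [CommSemiring R] [AddCommMonoid C] [Module R C] [Coalgebra R C]
  [AddCommMonoid A] [Module R A] [AddCommMonoid B] [Module R B] [AddCommMonoid E] [Module R E]

noncomputable def convolution (μ : A →ₗ[R] B →ₗ[R] E) (f : C →ₗ[R] A) (g : C →ₗ[R] B) :
    C →ₗ[R] E :=
  lift μ ∘ₗ map f g ∘ₗ comul

theorem Coalgebra.Repr.convolution_apply {ι : Type*} {c : C} (r : Repr R c ι)
    (μ : A →ₗ[R] B →ₗ[R] E) (f : C →ₗ[R] A) (g : C →ₗ[R] B) :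
    convolution μ f g c = ∑ i ∈ r.index, μ (f (r.left i)) (g (r.right i)) := by
  simp [convolution, ← r.eq]

theorem Coalgebra.sum_smul_counit {ι : Type*} {c : C} (r : Repr R c ι) :
    ∑ i ∈ r.index, counit (R := R) (r.right i) • r.left i = c := by
  simpa only [map_sum, _root_.TensorProduct.rid_tmul, one_smul] using
    congrArg (_root_.TensorProduct.rid R C) (sum_tmul_counit_eq r)

theorem convolution_counit_left (μ : A →ₗ[R] B →ₗ[R] E) (e : A) (g : C →ₗ[R] B) :
    convolution μ (counit.smulRight e) g = μ e ∘ₗ g := by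
  ext c
  conv_rhs => rw [← sum_counit_smul (ℛ R c)]
  simp [(ℛ R c).convolution_apply]

theorem convolution_counit_right (μ : A →ₗ[R] B →ₗ[R] E) (f : C →ₗ[R] A) (e : B) :
    convolution μ f (counit.smulRight e) = μ.flip e ∘ₗ f := by
  ext c
  conv_rhs => rw [← sum_smul_counit (ℛ R c)]
  simp [(ℛ R c).convolution_apply]

-- The one use of coassociativity: both sides are `∑ μ (f c₁) (K c₃ c₂)`.
theorem Coalgebra.Repr.sum_convolution_apply {ι : Type*} {c : C} (r : Repr R c ι)
    (μ : A →ₗ[R] B →ₗ[R] E) (f : C →ₗ[R] A) (K : C →ₗ[R] C →ₗ[R] B) :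
    ∑ i ∈ r.index, convolution μ f (K (r.right i)) (r.left i) =
      convolution μ f (convolution K.flip .id .id) c := by
  let Ψ : C ⊗[R] (C ⊗[R] C) →ₗ[R] E := lift ((μ ∘ₗ f).compl₂ (lift K.flip))
  have := congr(Ψ $(sum_tmul_tmul_eq r (fun i ↦ ℛ R (r.left i)) (fun i ↦ ℛ R (r.right i))))
  rw [r.convolution_apply]
  simpa [Ψ, (ℛ R _).convolution_apply] using this

theorem convolution_compl₁₂ {A' B' : Type*} [AddCommMonoid A'] [Module R A'] [AddCommMonoid B']
    [Module R B'] (μ : A →ₗ[R] B →ₗ[R] E) (φ : A' →ₗ[R] A) (ψ : B' →ₗ[R] B) (f : C →ₗ[R] A')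
    (g : C →ₗ[R] B') :
    convolution (μ.compl₁₂ φ ψ) f g = convolution μ (φ ∘ₗ f) (ψ ∘ₗ g) := by
  ext c
  simp [(ℛ R c).convolution_apply]

theorem comp_convolution {E' : Type*} [AddCommMonoid E'] [Module R E'] (μ : A →ₗ[R] B →ₗ[R] E)
    (φ : E →ₗ[R] E') (f : C →ₗ[R] A) (g : C →ₗ[R] B) :
    φ ∘ₗ convolution μ f g = convolution (μ.compr₂ φ) f g := by
  ext c
  simp [(ℛ R c).convolution_apply]

theorem convolution_assoc (μ : A →ₗ[R] A →ₗ[R] A) (hμ : ∀ a b c, μ (μ a b) c = μ a (μ b c))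
    (f g k : C →ₗ[R] A) :
    convolution μ (convolution μ f g) k = convolution μ f (convolution μ g k) := by
  ext c
  have hgk : convolution (μ.compl₁₂ g k) .id .id = convolution μ g k := by
    simpa using convolution_compl₁₂ μ g k .id .id
  rw [← hgk, ← LinearMap.flip_flip (μ.compl₁₂ g k), ← (ℛ R c).sum_convolution_apply,
    (ℛ R c).convolution_apply]
  refine Finset.sum_congr rfl fun i _ ↦ ?_
  simp [(ℛ R ((ℛ R c).left i)).convolution_apply, hμ]

theorem convolution_left_inv_eq_right_inv (μ : A →ₗ[R] A →ₗ[R] A)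
    (hμ : ∀ a b c, μ (μ a b) c = μ a (μ b c)) {e : A} (he : μ e = .id) (he' : μ.flip e = .id)
    {f g k : C →ₗ[R] A} (hg : convolution μ g f = counit.smulRight e)
    (hk : convolution μ f k = counit.smulRight e) : g = k := by
  have := convolution_assoc μ hμ g f k
  rwa [hg, hk, convolution_counit_left, convolution_counit_right, he, he',
    LinearMap.id_comp, LinearMap.id_comp, eq_comm] at this

theorem convolution_comp_of_comul_comp {φ : C →ₗ[R] C}
    (hφ : comul ∘ₗ φ = map φ φ ∘ₗ (TensorProduct.comm R C C).toLinearMap ∘ₗ comul)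
    (μ : A →ₗ[R] B →ₗ[R] E) (f : C →ₗ[R] A) (g : C →ₗ[R] B) :
    convolution μ f g ∘ₗ φ = convolution μ.flip (g ∘ₗ φ) (f ∘ₗ φ) := by
  have hswap : lift μ ∘ₗ map f g ∘ₗ map φ φ ∘ₗ (TensorProduct.comm R C C).toLinearMap =
      lift μ.flip ∘ₗ map (g ∘ₗ φ) (f ∘ₗ φ) := by
    ext a b
    simp
  simp only [convolution, LinearMap.comp_assoc, hφ]
  exact congrArg (· ∘ₗ comul) hswap

end Convolution

universe w

noncomputable def Coalgebra.Repr.ulift {R C : Type*} [CommSemiring R] [AddCommMonoid C]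
    [Module R C] [CoalgebraStruct R C] {ι : Type*} {c : C} (r : Repr R c ι) :
    Repr R c (ULift.{w} (Fin r.index.card)) where
  index := Finset.univ
  left i := r.left (r.index.equivFin.symm i.down)
  right i := r.right (r.index.equivFin.symm i.down)
  eq := by
    rw [← r.eq, ← Finset.sum_coe_sort r.index]
    exact Fintype.sum_equiv (Equiv.ulift.trans r.index.equivFin.symm) _ _ fun _ ↦ rfl

namespace HopfMul

variable {R H} (M : HopfMul R H)

@[simp]
theorem mulLeft_one : M.mul M.one = .id :=
  LinearMap.ext M.one_mul

@[simp]
theorem mulRight_one : M.mul.flip M.one = .id :=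
  LinearMap.ext M.mul_one

theorem convolution_S_id : convolution M.mul M.S .id = counit.smulRight M.one := by
  ext a
  rw [(ℛ R a).ulift.{0}.convolution_apply]
  exact M.S_mul_left a _

theorem convolution_id_S : convolution M.mul .id M.S = counit.smulRight M.one := by
  ext a
  rw [(ℛ R a).ulift.{0}.convolution_apply]
  exact M.S_mul_right a _

theorem sum_S_mul {ι : Type*} {a : H} (r : Repr R a ι) :
    ∑ i ∈ r.index, M.mul (M.S (r.left i)) (r.right i) = counit (R := R) a • M.one := by
  simpa [r.convolution_apply] using LinearMap.congr_fun M.convolution_S_id a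

theorem comul_mul_eq_map₂ (a b : H) :
    comul (M.mul a b) = map₂ M.mul M.mul (comul a) (comul b) := by
  rw [M.comul_mul a b (ℛ R a).ulift (ℛ R b).ulift, ← (ℛ R a).ulift.eq, ← (ℛ R b).ulift.eq]
  simp only [map_sum, LinearMap.coe_sum, Finset.sum_apply, map₂_apply_tmul]
  exact Finset.sum_comm

theorem map₂_assoc (x y z : H ⊗[R] H) :
    map₂ M.mul M.mul (map₂ M.mul M.mul x y) z = map₂ M.mul M.mul x (map₂ M.mul M.mul y z) := by
  induction x using TensorProduct.induction_on with
  | zero => simp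
  | add x x' hx hx' => simp only [map_add, LinearMap.add_apply, hx, hx']
  | tmul a b =>
    induction y using TensorProduct.induction_on with
    | zero => simp
    | add y y' hy hy' => simp only [map_add, LinearMap.add_apply, hy, hy']
    | tmul c d =>
      induction z using TensorProduct.induction_on with
      | zero => simp
      | add z z' hz hz' => simp only [map_add, hz, hz']
      | tmul e f => simp [M.mul_assoc]

theorem map₂_one_tmul_one : map₂ M.mul M.mul (M.one ⊗ₜ M.one) = .id := by
  ext a b
  simp

theorem map₂_flip_one_tmul_one : (map₂ M.mul M.mul).flip (M.one ⊗ₜ M.one) = .id := by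
  ext a b
  simp [M.mul_one]

theorem convolution_rTensor_S_comul_apply (y : H) :
    convolution (LinearMap.rTensorHom H ∘ₗ M.mul) M.S comul y = M.one ⊗ₜ y := by
  have hcomul : convolution (TensorProduct.mk R H H) .id .id = comul := by
    simp [convolution, lift_mk]
  rw [← hcomul, ← LinearMap.flip_flip (TensorProduct.mk R H H), ← (ℛ R y).sum_convolution_apply]
  conv_rhs => rw [← sum_counit_smul (ℛ R y)]
  rw [tmul_sum]
  refine Finset.sum_congr rfl fun i _ ↦ ?_
  simp [(ℛ R ((ℛ R y).left i)).convolution_apply, ← sum_tmul, M.sum_S_mul, smul_tmul']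

-- In `∑ S(x₂)x₃ ⊗ S(x₁)x₄` the middle pair contracts to `ε(x₂) 1` first, then `S(x₁)x₂` does.
theorem convolution_twist_S_comul :
    convolution (map₂ M.mul M.mul)
        (map M.S M.S ∘ₗ (TensorProduct.comm R H H).toLinearMap ∘ₗ comul) comul =
      counit.smulRight (M.one ⊗ₜ M.one) := by
  let θ : H →ₗ[R] H ⊗[R] H →ₗ[R] H ⊗[R] H := LinearMap.lTensorHom H ∘ₗ M.mul
  let K : H →ₗ[R] H →ₗ[R] H ⊗[R] H :=
    ((LinearMap.rTensorHom H ∘ₗ M.mul ∘ₗ M.S).compl₂ comul).flip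
  have hK (z l : H) : map₂ M.mul M.mul
      (map M.S M.S (TensorProduct.comm R H H (comul l))) (comul z) =
      convolution θ M.S (K z) l := by
    simp only [(ℛ R l).convolution_apply, θ, K, LinearMap.comp_apply, LinearMap.flip_apply,
      LinearMap.compl₂_apply]
    rw [← (ℛ R l).eq, ← (ℛ R z).eq]
    simp [map_sum]
    exact Finset.sum_comm
  have hK' : convolution K.flip .id .id = TensorProduct.mk R H H M.one := by
    ext y
    rw [TensorProduct.mk_apply, ← M.convolution_rTensor_S_comul_apply y,
      (ℛ R y).convolution_apply, (ℛ R y).convolution_apply]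
    simp [K]
  ext x
  rw [(ℛ R x).convolution_apply]
  simp only [LinearMap.comp_apply, LinearEquiv.coe_coe, hK]
  rw [(ℛ R x).sum_convolution_apply, hK', (ℛ R x).convolution_apply]
  simp [θ, ← tmul_sum, M.sum_S_mul, smul_tmul']

theorem comul_comp_S :
    comul ∘ₗ M.S = map M.S M.S ∘ₗ (TensorProduct.comm R H H).toLinearMap ∘ₗ comul := by
  have hright : convolution (map₂ M.mul M.mul) comul (comul ∘ₗ M.S) =
      counit.smulRight (M.one ⊗ₜ M.one) := by
    have hmul : M.mul.compr₂ comul = (map₂ M.mul M.mul).compl₁₂ comul comul :=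
      LinearMap.ext₂ M.comul_mul_eq_map₂
    have := comp_convolution M.mul comul .id M.S
    rw [hmul, convolution_compl₁₂, LinearMap.comp_id, M.convolution_id_S] at this
    rw [← this]
    ext
    simp [M.comul_one]
  exact (convolution_left_inv_eq_right_inv _ M.map₂_assoc M.map₂_one_tmul_one
    M.map₂_flip_one_tmul_one M.convolution_twist_S_comul hright).symm

end HopfMul

namespace HopfBrace

variable {R H} (Br : HopfBrace R H)

noncomputable def action (h : H) : H →ₗ[R] H :=
  convolution Br.dot.mul Br.dot.S (Br.circ.mul.flip h)

theorem circ_mul_flip_dot_mul (z h : H) :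
    Br.circ.mul.flip (Br.dot.mul z h) =
      convolution Br.dot.mul (Br.circ.mul.flip z) (Br.action h) := by
  ext g
  let r := (ℛ R g).ulift.{0}
  rw [LinearMap.flip_apply, Br.compat g z h r fun i ↦ (ℛ R (r.right i)).ulift.{0},
    r.convolution_apply]
  refine Finset.sum_congr rfl fun i _ ↦ ?_
  simp [action, (ℛ R (r.right i)).ulift.{0}.convolution_apply, Br.dot.mul_assoc]

theorem circ_one_eq_dot_one : Br.circ.one = Br.dot.one := by
  have h := Br.circ_mul_flip_dot_mul Br.dot.one Br.circ.one
  rw [action, Br.dot.one_mul, Br.circ.mulRight_one, Br.dot.convolution_S_id,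
    convolution_counit_right, Br.dot.mulRight_one, LinearMap.id_comp] at h
  simpa [Br.circ.one_mul] using LinearMap.congr_fun h Br.circ.one

theorem convolution_id_action (h : H) :
    convolution Br.dot.mul .id (Br.action h) = Br.circ.mul.flip h := by
  rw [action, ← convolution_assoc _ Br.dot.mul_assoc, Br.dot.convolution_id_S,
    convolution_counit_left, Br.dot.mulLeft_one, LinearMap.id_comp]

-- By the brace axiom and `Δ T = (T ⊗ T) τ Δ`, `T(x₁) ∘ (x₂ · h)` sums to
-- `(T(x₃) ∘ x₄) · S(T(x₂)) · (T(x₁) ∘ h)`, where `T(x₃) ∘ x₄` contracts to `ε(x₃) 1_∘ = ε(x₃) 1_·`.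
theorem action_comp_S (h : H) :
    Br.action h ∘ₗ Br.circ.S = convolution Br.circ.mul Br.circ.S (Br.dot.mul.flip h) := by
  let K : H →ₗ[R] H →ₗ[R] H := LinearMap.lcomp R H Br.circ.S ∘ₗ Br.circ.mul.flip
  have hK : K.flip = Br.circ.mul.compl₁₂ Br.circ.S .id := rfl
  have hstep (y z : H) : Br.circ.mul (Br.circ.S y) (Br.dot.mul.flip h z) =
      convolution Br.dot.mul.flip (Br.action h ∘ₗ Br.circ.S) (K z) y := by
    have := congrArg (· ∘ₗ Br.circ.S) (Br.circ_mul_flip_dot_mul z h)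
    rw [convolution_comp_of_comul_comp Br.circ.comul_comp_S] at this
    exact LinearMap.congr_fun this y
  ext x
  rw [(ℛ R x).convolution_apply]
  simp only [hstep]
  rw [(ℛ R x).sum_convolution_apply, hK, convolution_compl₁₂, LinearMap.comp_id,
    LinearMap.comp_id, Br.circ.convolution_S_id, convolution_counit_right, LinearMap.flip_flip,
    circ_one_eq_dot_one, Br.dot.mulLeft_one, LinearMap.id_comp]

theorem convolution_id_action_comp_S (h : H) :
    convolution Br.circ.mul .id (Br.action h ∘ₗ Br.circ.S) = Br.dot.mul.flip h := by
  rw [action_comp_S, ← convolution_assoc _ Br.circ.mul_assoc, Br.circ.convolution_id_S,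
    convolution_counit_left, Br.circ.mulLeft_one, LinearMap.id_comp]

end HopfBrace

/-- In a Hopf brace, with `g⇀h := S(g₍₁₎)·(g₍₂₎∘h)`, one has
`g∘h = g₍₁₎·(g₍₂₎⇀h)` and `g·h = g₍₁₎∘(T(g₍₂₎)⇀h)`. -/
theorem hopfBrace_circ_dot_via_action (Br : HopfBrace R H) (act : H → H → H)
    (hact : ∀ (g h : H) {ι : Type*} (r : Coalgebra.Repr R g ι),
      act g h = ∑ i ∈ r.index,
        Br.dot.mul (Br.dot.S (r.left i)) (Br.circ.mul (r.right i) h)) :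
    (∀ (g h : H) {ι : Type*} (r : Coalgebra.Repr R g ι),
      Br.circ.mul g h = ∑ i ∈ r.index, Br.dot.mul (r.left i) (act (r.right i) h)) ∧
    (∀ (g h : H) {ι : Type*} (r : Coalgebra.Repr R g ι),
      Br.dot.mul g h =
        ∑ i ∈ r.index, Br.circ.mul (r.left i) (act (Br.circ.S (r.right i)) h)) := by
  have hact_action (g h : H) : act g h = Br.action h g := by
    rw [hact g h (ℛ R g).ulift, HopfBrace.action, (ℛ R g).ulift.convolution_apply]
    rfl
  refine ⟨fun g h ι r ↦ ?_, fun g h ι r ↦ ?_⟩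
  · rw [← LinearMap.flip_apply (m := g) Br.circ.mul, ← Br.convolution_id_action,
      r.convolution_apply]
    simp [hact_action]
  · rw [← LinearMap.flip_apply (m := g) Br.dot.mul, ← Br.convolution_id_action_comp_S,
      r.convolution_apply]
    simp [hact_action]
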